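/- arXiv:1901.10649 — 2 statements merged into one kernel-verified Lean document; each statement's English description precedes it below -/
import Mathlib

section
/- There exists a proper convex function g : ℝ → ℝ∪{+∞} that is not lower semicontinuous but whose subdifferential ∂g is maximal monotone. -/
open scoped Topology

section Defs

variable {X : Type*} [AddCommGroup X] [Module ℝ X] [TopologicalSpace X]

/-- `p ∈ ∂f(x)`: `f x` is finite and `f y ≥ f x + ⟨y - x, p⟩` for all `y`. -/
def IsSubgrad (f : X → EReal) (x : X) (p : X →L[ℝ] ℝ) : Prop :=
  f x ≠ ⊤ ∧ f x ≠ ⊥ ∧ ∀ y, f x + (p (y - x) : EReal) ≤ f y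

/-- Graph of the convex subdifferential of `f`. -/
def graphSub (f : X → EReal) : Set (X × (X →L[ℝ] ℝ)) :=
  {q | IsSubgrad f q.1 q.2}

/-- Domain `D(∂f)` of the subdifferential. -/
def subdiffDom (f : X → EReal) : Set X := {x | ∃ p, IsSubgrad f x p}

/-- Range `R(∂f)` of the subdifferential. -/
def subdiffRan (f : X → EReal) : Set (X →L[ℝ] ℝ) := {p | ∃ x, IsSubgrad f x p}

/-- Monotone subset of `X × X*`. -/
def MonotoneSet (S : Set (X × (X →L[ℝ] ℝ))) : Prop :=
  ∀ a ∈ S, ∀ b ∈ S, 0 ≤ a.2 (a.1 - b.1) - b.2 (a.1 - b.1)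

/-- Maximal monotone subset of `X × X*` (maximal w.r.t. graph inclusion). -/
def MaxMonotoneSet (S : Set (X × (X →L[ℝ] ℝ))) : Prop :=
  MonotoneSet S ∧ ∀ T, MonotoneSet T → S ⊆ T → T = S

/-- Proper function: never `−∞` and not identically `+∞`. -/
def ProperE {Y : Type*} (f : Y → EReal) : Prop :=
  (∃ x, f x ≠ ⊤) ∧ ∀ x, f x ≠ ⊥

/-- Convexity of an extended-real-valued function via its epigraph. -/
def ConvexEpi (f : X → EReal) : Prop :=
  Convex ℝ {q : X × ℝ | f q.1 ≤ (q.2 : EReal)}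

/-- The lsc convex hull: the greatest lsc convex function majorized by `f`. -/
noncomputable def lscConvHull (f : X → EReal) : X → EReal := fun x =>
  sSup {v | ∃ g : X → EReal, ConvexEpi g ∧ LowerSemicontinuous g ∧ g ≤ f ∧ v = g x}

/-- Convex conjugate w.r.t. the dual system `(X, X*)`. -/
noncomputable def conjE (f : X → EReal) (p : X →L[ℝ] ℝ) : EReal :=
  ⨆ x, ((p x : EReal) - f x)

/-- Biconjugate `f**`. -/
noncomputable def biconjE (f : X → EReal) (x : X) : EReal :=
  ⨆ p : X →L[ℝ] ℝ, ((p x : EReal) - conjE f p)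

/-- Fitzpatrick function of `∂f`. -/
noncomputable def fitzSub (f : X → EReal) (x : X) (p : X →L[ℝ] ℝ) : EReal :=
  ⨆ a, ⨆ s, ⨆ _ : IsSubgrad f a s, ((s (x - a) + p a : ℝ) : EReal)

/-- Upper envelope `f^∪(x) = sup{⟨x−a, a*⟩ + f(a) : (a,a*) ∈ Graph ∂f}`. -/
noncomputable def upperEnv (f : X → EReal) (x : X) : EReal :=
  ⨆ a, ⨆ s, ⨆ _ : IsSubgrad f a s, ((s (x - a) : EReal) + f a)

end Defs

/-!
The witness is `-√x` on `(0, ∞)`, extended by `+∞`: convex, and not lower semicontinuous at `0`,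
where its values jump from near `0` to `+∞`. Its subdifferential is the graph of the derivative
`φ x = -1/(2√x)` on `(0, ∞)`, and `φ` is a strictly increasing bijection onto `(-∞, 0)`. A pair
`(a, c)` monotonically related to this graph cannot have `c ≥ 0` (test it against points `x > a`),
and for `c < 0` strict monotonicity of `φ` squeezes `a` to the unique `x₀` with `φ x₀ = c`.
-/

open Set Filter

noncomputable def extendTop {X : Type*} (s : Set X) (f : X → ℝ) (x : X) : EReal :=
  open Classical in if x ∈ s then (f x : EReal) else ⊤

section ExtendTop

variable {X : Type*} {s : Set X} {f : X → ℝ} {x : X}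

theorem extendTop_of_mem (hx : x ∈ s) : extendTop s f x = f x := by
  simp [extendTop, hx]

theorem extendTop_of_notMem (hx : x ∉ s) : extendTop s f x = ⊤ := by
  simp [extendTop, hx]

theorem extendTop_le_coe_iff {r : ℝ} : extendTop s f x ≤ r ↔ x ∈ s ∧ f x ≤ r := by
  by_cases hx : x ∈ s
  · simp [extendTop_of_mem hx, hx]
  · simp [extendTop_of_notMem hx, hx]

theorem properE_extendTop (hs : s.Nonempty) : ProperE (extendTop s f) := by
  refine ⟨⟨hs.some, by simp [extendTop_of_mem hs.some_mem]⟩, fun x => ?_⟩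
  by_cases hx : x ∈ s
  · simp [extendTop_of_mem hx]
  · simp [extendTop_of_notMem hx]

theorem not_lowerSemicontinuous_extendTop [TopologicalSpace X] {x₀ : X} {C : ℝ}
    (hx₀ : x₀ ∈ closure s) (hx₀s : x₀ ∉ s) (hC : ∀ x ∈ s, f x ≤ C) :
    ¬ LowerSemicontinuous (extendTop s f) := by
  intro hlsc
  have hlarge : ∀ᶠ x in 𝓝 x₀, ((C + 1 : ℝ) : EReal) < extendTop s f x :=
    hlsc x₀ _ (by simp only [extendTop_of_notMem hx₀s]; exact EReal.coe_lt_top _)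
  obtain ⟨x, hx, hxs⟩ := (hlarge.and_frequently (mem_closure_iff_frequently.1 hx₀)).exists
  rw [extendTop_of_mem hxs, EReal.coe_lt_coe_iff] at hx
  linarith [hC x hxs]

end ExtendTop

theorem convexEpi_extendTop {X : Type*} [AddCommGroup X] [Module ℝ X] {s : Set X} {f : X → ℝ}
    (hf : ConvexOn ℝ s f) : ConvexEpi (extendTop s f) := by
  simpa only [ConvexEpi, extendTop_le_coe_iff] using hf.convex_epigraph

section Subdifferential

variable {X : Type*} [AddCommGroup X] [Module ℝ X] [TopologicalSpace X]

theorem isSubgrad_extendTop_iff {s : Set X} {f : X → ℝ} {x : X} {p : X →L[ℝ] ℝ} :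
    IsSubgrad (extendTop s f) x p ↔ x ∈ s ∧ ∀ y ∈ s, f x + p (y - x) ≤ f y := by
  by_cases hx : x ∈ s
  · simp only [IsSubgrad, extendTop_of_mem hx, EReal.coe_ne_top, EReal.coe_ne_bot, ne_eq,
      not_false_eq_true, true_and, hx]
    refine forall_congr' fun y => ?_
    by_cases hy : y ∈ s
    · simp only [extendTop_of_mem hy, hy, true_implies, ← EReal.coe_add, EReal.coe_le_coe_iff]
    · simp [extendTop_of_notMem hy, hy]
  · simp [IsSubgrad, extendTop_of_notMem hx, hx]

theorem monotoneSet_graphSub (f : X → EReal) : MonotoneSet (graphSub f) := by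
  rintro ⟨a, s⟩ ⟨hat, hab, has⟩ ⟨b, t⟩ ⟨hbt, hbb, hbs⟩
  lift f a to ℝ using ⟨hat, hab⟩ with u hu
  lift f b to ℝ using ⟨hbt, hbb⟩ with v hv
  have hs := has b
  have ht := hbs a
  rw [← hv, ← EReal.coe_add, EReal.coe_le_coe_iff] at hs
  rw [← hu, ← EReal.coe_add, EReal.coe_le_coe_iff] at ht
  rw [← neg_sub b a, map_neg, map_neg]
  rw [← neg_sub b a, map_neg] at ht
  linarith

end Subdifferential

theorem HasFDerivAt.eq_of_eventually_add_le {E : Type*} [NormedAddCommGroup E] [NormedSpace ℝ E]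
    {f : E → ℝ} {f' p : E →L[ℝ] ℝ} {x : E} (hf : HasFDerivAt f f' x)
    (h : ∀ᶠ y in 𝓝 x, f x + p (y - x) ≤ f y) : p = f' := by
  have hmin : IsLocalMin (f - ⇑p) x := by
    filter_upwards [h] with y hy
    rw [map_sub] at hy
    simp only [Pi.sub_apply]
    linarith
  exact (sub_eq_zero.1 (hmin.hasFDerivAt_eq_zero (hf.sub p.hasFDerivAt))).symm

theorem ContinuousLinearMap.apply_eq_mul_apply_one (p : ℝ →L[ℝ] ℝ) (t : ℝ) : p t = t * p 1 := by
  simpa using p.map_smul t 1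

theorem eq_of_strictMonoOn_of_forall_mul_nonneg {φ : ℝ → ℝ} {s : Set ℝ} {x₀ a : ℝ}
    (hφ : StrictMonoOn φ s) (hs : s ∈ 𝓝 x₀) (h : ∀ x ∈ s, 0 ≤ (φ x₀ - φ x) * (a - x)) :
    a = x₀ := by
  have hx₀ : x₀ ∈ s := mem_of_mem_nhds hs
  by_contra hne
  rcases lt_or_gt_of_ne hne with ha | ha
  · obtain ⟨x, hxs, hax, hxx₀⟩ : ∃ x ∈ s, x ∈ Ioo a x₀ :=
      ((eventually_nhdsWithin_of_eventually_nhds hs).and (Ioo_mem_nhdsLT ha)).exists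
    nlinarith [h x hxs, hφ hxs hx₀ hxx₀]
  · obtain ⟨x, hxs, hx₀x, hxa⟩ : ∃ x ∈ s, x ∈ Ioo x₀ a :=
      ((eventually_nhdsWithin_of_eventually_nhds hs).and (Ioo_mem_nhdsGT ha)).exists
    nlinarith [h x hxs, hφ hx₀ hxs hx₀x]

theorem Real.sqrt_le_sqrt_add_sub_div_two_sqrt {x y : ℝ} (hx : 0 < x) (hy : 0 ≤ y) :
    √y ≤ √x + (y - x) / (2 * √x) := by
  have hsx : 0 < √x := Real.sqrt_pos.2 hx
  rw [← sub_nonneg]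
  have key : √x + (y - x) / (2 * √x) - √y = (√x - √y) ^ 2 / (2 * √x) := by
    field_simp
    linear_combination Real.sq_sqrt hx.le - Real.sq_sqrt hy
  rw [key]
  positivity

theorem strictMonoOn_neg_one_div_two_mul_sqrt :
    StrictMonoOn (fun x : ℝ => -(1 / (2 * √x))) (Ioi 0) := by
  intro x hx y _ hxy
  have : 0 ≤ x := le_of_lt hx
  have : 0 < √x := Real.sqrt_pos.2 hx
  simp only
  gcongr

theorem exists_neg_one_div_two_mul_sqrt_eq {c : ℝ} (hc : c < 0) :
    ∃ x > 0, -(1 / (2 * √x)) = c := by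
  have hc' : (2 * c)⁻¹ < 0 := inv_lt_zero.2 (by linarith)
  refine ⟨(2 * c)⁻¹ ^ 2, pow_two_pos_of_ne_zero hc'.ne, ?_⟩
  rw [Real.sqrt_sq_eq_abs, abs_of_neg hc']
  field_simp

noncomputable def negSqrtExt : ℝ → EReal := extendTop (Ioi 0) fun x => -√x

theorem isSubgrad_negSqrtExt_iff {x : ℝ} {p : ℝ →L[ℝ] ℝ} :
    IsSubgrad negSqrtExt x p ↔ 0 < x ∧ p 1 = -(1 / (2 * √x)) := by
  rw [negSqrtExt, isSubgrad_extendTop_iff]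
  refine and_congr_right fun hx => ⟨fun h => ?_, fun hp y hy => ?_⟩
  · have hderiv : HasDerivAt (fun y => -√y) (-(1 / (2 * √x))) x :=
      (Real.hasDerivAt_sqrt hx.ne').neg
    have hp := hderiv.hasFDerivAt.eq_of_eventually_add_le (p := p)
      (by filter_upwards [Ioi_mem_nhds hx] with y hy using h y hy)
    simp [hp]
  · have := Real.sqrt_le_sqrt_add_sub_div_two_sqrt hx (le_of_lt hy)
    rw [p.apply_eq_mul_apply_one, hp, mul_neg, mul_one_div]
    linarith

theorem maxMonotoneSet_graphSub_negSqrtExt : MaxMonotoneSet (graphSub negSqrtExt) := by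
  refine ⟨monotoneSet_graphSub _, fun T hT hsub => Subset.antisymm ?_ hsub⟩
  rintro ⟨a, p⟩ haT
  have hmono : ∀ x > 0, 0 ≤ (p 1 - -(1 / (2 * √x))) * (a - x) := by
    intro x hx
    have hxT : (x, -(1 / (2 * √x)) • ContinuousLinearMap.id ℝ ℝ) ∈ T :=
      hsub (isSubgrad_negSqrtExt_iff.2 ⟨hx, by simp⟩)
    have h := hT _ haT _ hxT
    simp only [FunLike.coe_smul, Pi.smul_apply, ContinuousLinearMap.id_apply,
      smul_eq_mul] at h
    rw [p.apply_eq_mul_apply_one] at h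
    linarith
  obtain ⟨x₀, hx₀, hp⟩ : ∃ x₀ > 0, -(1 / (2 * √x₀)) = p 1 := by
    refine exists_neg_one_div_two_mul_sqrt_eq (not_le.1 fun hp => ?_)
    have hx : 0 < |a| + 1 := by positivity
    have hpos : 0 < p 1 - -(1 / (2 * √(|a| + 1))) := by
      have : 0 < √(|a| + 1) := Real.sqrt_pos.2 hx
      have : 0 < 1 / (2 * √(|a| + 1)) := by positivity
      linarith
    nlinarith [hmono _ hx, le_abs_self a]
  have ha : a = x₀ := eq_of_strictMonoOn_of_forall_mul_nonneg
    strictMonoOn_neg_one_div_two_mul_sqrt (Ioi_mem_nhds hx₀) fun x hx => hp ▸ hmono x hx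
  exact isSubgrad_negSqrtExt_iff.2 ⟨ha ▸ hx₀, ha ▸ hp.symm⟩

theorem exists_nonlsc_convex_with_maxMonotone_subdiff :
    ∃ g : ℝ → EReal, (∀ x, g x ≠ ⊥) ∧ ProperE g ∧ ConvexEpi g ∧
      ¬ LowerSemicontinuous g ∧ MaxMonotoneSet (graphSub g) := by
  have hproper : ProperE negSqrtExt := properE_extendTop nonempty_Ioi
  have hconvex : ConvexEpi negSqrtExt := convexEpi_extendTop
    (Real.strictConcaveOn_sqrt.concaveOn.subset Ioi_subset_Ici_self (convex_Ioi 0)).neg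
  have hnotLsc : ¬ LowerSemicontinuous negSqrtExt :=
    not_lowerSemicontinuous_extendTop (x₀ := 0) (C := 0) (by simp) (by simp)
      fun x _ => neg_nonpos.2 (Real.sqrt_nonneg x)
  exact ⟨negSqrtExt, hproper.2, hproper, hconvex, hnotLsc, maxMonotoneSet_graphSub_negSqrtExt⟩
end

section
/- Define the low-upper envelope f^⌣(x) = sup{⟨x−a, a*⟩ + f(a) : (a,a*) ∈ Graph ∂f, f(a) ≤ f(x)}. Then for every f : X → ℝ̄: f^⌣ ≤ f^∪ ≤ f; f^⌣(x) = f(x) for x ∈ D(∂f); and for every x ∈ X, f^⌣(x) ≤ φ_{∂f}(x, 0) + f(x). -/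
open scoped Topology

/-- Low-upper envelope of `f`. -/
noncomputable def lowUpperEnv {X : Type*} [AddCommGroup X] [Module ℝ X] [TopologicalSpace X]
    (f : X → EReal) (x : X) : EReal :=
  ⨆ a, ⨆ s, ⨆ _ : IsSubgrad f a s ∧ f a ≤ f x, ((s (x - a) : EReal) + f a)

section LowUpperEnv

variable {X : Type*} [AddCommGroup X] [Module ℝ X] [TopologicalSpace X] {f : X → EReal}
  {a x : X} {s : X →L[ℝ] ℝ}

theorem IsSubgrad.apply_sub_add_le (h : IsSubgrad f a s) (x : X) :
    (s (x - a) : EReal) + f a ≤ f x :=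
  add_comm (f a) (s (x - a) : EReal) ▸ h.2.2 x

theorem lowUpperEnv_le_upperEnv (x : X) : lowUpperEnv f x ≤ upperEnv f x :=
  iSup_mono fun _ => iSup_mono fun _ => iSup_le fun h => le_iSup_of_le h.1 le_rfl

theorem upperEnv_le (x : X) : upperEnv f x ≤ f x :=
  iSup_le fun _ => iSup_le fun _ => iSup_le fun h => h.apply_sub_add_le x

theorem le_lowUpperEnv_of_isSubgrad (h : IsSubgrad f x s) : f x ≤ lowUpperEnv f x := by
  have : (s (x - x) : EReal) + f x ≤ lowUpperEnv f x :=
    le_iSup_of_le x (le_iSup_of_le s (le_iSup_of_le ⟨h, le_rfl⟩ le_rfl))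
  simpa using this

theorem lowUpperEnv_eq_of_mem_subdiffDom (hx : x ∈ subdiffDom f) : lowUpperEnv f x = f x :=
  have ⟨_, h⟩ := hx
  ((lowUpperEnv_le_upperEnv x).trans (upperEnv_le x)).antisymm (le_lowUpperEnv_of_isSubgrad h)

theorem lowUpperEnv_le_fitzSub_zero_add (x : X) : lowUpperEnv f x ≤ fitzSub f x 0 + f x := by
  refine iSup_le fun a => iSup_le fun s => iSup_le fun h => add_le_add ?_ h.2
  refine le_iSup_of_le a (le_iSup_of_le s (le_iSup_of_le h.1 ?_))
  simp

end LowUpperEnv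

theorem lowUpperEnv_props_general {X : Type*} [AddCommGroup X] [Module ℝ X] [TopologicalSpace X]
    (f : X → EReal) :
    (∀ x, lowUpperEnv f x ≤ upperEnv f x) ∧
      (∀ x, upperEnv f x ≤ f x) ∧
      (∀ x ∈ subdiffDom f, lowUpperEnv f x = f x) ∧
      (∀ x, lowUpperEnv f x ≤ fitzSub f x 0 + f x) :=
  ⟨lowUpperEnv_le_upperEnv, upperEnv_le, fun _ => lowUpperEnv_eq_of_mem_subdiffDom,
    lowUpperEnv_le_fitzSub_zero_add⟩

theorem lowUpperEnv_props {X : Type*} [AddCommGroup X] [Module ℝ X] [TopologicalSpace X]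
    [IsTopologicalAddGroup X] [ContinuousSMul ℝ X] [LocallyConvexSpace ℝ X] [T2Space X]
    (f : X → EReal) :
    (∀ x, lowUpperEnv f x ≤ upperEnv f x) ∧
      (∀ x, upperEnv f x ≤ f x) ∧
      (∀ x ∈ subdiffDom f, lowUpperEnv f x = f x) ∧
      (∀ x, lowUpperEnv f x ≤ fitzSub f x 0 + f x) :=
  lowUpperEnv_props_general f
end
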